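/- arXiv:2309.04020 — 2 statements merged into one kernel-verified Lean document; each statement's English description precedes it below -/
import Mathlib

section
/- Let α, α′ : A → 2^N be arbitrary maps with nonempty vanishing sets C_α = {x : α(x) = ∅} and C_{α′} = {x : α′(x) = ∅}, each implementable as a local compromiser assignment for its own constraint. Suppose α(x) ⊆ α′(x) for every allocation x, and α′ satisfies forward consistency. Then for every preference profile ≻ and every agent i, LP_α(≻)_i ≿_i LP_{α′}(≻)_i. -/
/- Common framework: constrained allocation, local priority mechanisms
   (Root & Ahn, "Local Priority Mechanisms"). Agents `N`, objects `O`.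
   A strict preference is encoded as a `LinearOrder` on `O`, where
   `pi.lt b a` means `a` is strictly preferred to `b`. -/

open Classical

noncomputable section

variable {N O : Type}

/-- `a` is strictly preferred to `b` under `pi`. -/
def sPref (pi : LinearOrder O) (a b : O) : Prop := pi.lt b a

/-- `a` is weakly preferred to `b` under `pi`. -/
def wPref (pi : LinearOrder O) (a b : O) : Prop := a = b ∨ pi.lt b a

/-- The favourite (top-ranked) object under `pi`. -/
def topObj [Fintype O] [Nonempty O] (pi : LinearOrder O) : O :=
  @Finset.max' O pi Finset.univ Finset.univ_nonempty

/-- `tau1 p` is the allocation assigning each agent her favourite object. -/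
def tau1 [Fintype O] [Nonempty O] (p : N → LinearOrder O) : N → O :=
  fun i => topObj (p i)

/-- The strict lower contour set of `a` under `pi`, as a finset. -/
def LCfin [Fintype O] (pi : LinearOrder O) (a : O) : Finset O :=
  Finset.univ.filter fun b => pi.lt b a

/-- The best element of the strict lower contour set of `a` (junk value `a` if empty). -/
def bestLC [Fintype O] (pi : LinearOrder O) (a : O) : O :=
  if h : (LCfin pi a).Nonempty then @Finset.max' O pi _ h else a

/-- At `x`, no local compromiser has an empty strict lower contour set. -/
def lpNoFail [Fintype O] (α : (N → O) → Set N) (p : N → LinearOrder O) (x : N → O) : Prop :=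
  ∀ i ∈ α x, (LCfin (p i) (x i)).Nonempty

/-- One step of the local priority algorithm: all local compromisers move to their
next-favourite object, everyone else stays put. -/
def lpStep [Fintype O] (α : (N → O) → Set N) (p : N → LinearOrder O) (x : N → O) : N → O :=
  fun k => if k ∈ α x then bestLC (p k) (x k) else x k

/-- The local priority algorithm for `α` at profile `p` terminates (without failure)
returning the feasible allocation `y`. -/
def lpRunsTo [Fintype O] [Nonempty O] (C : Set (N → O)) (α : (N → O) → Set N)
    (p : N → LinearOrder O) (y : N → O) : Prop :=
  ∃ (m : ℕ) (x : ℕ → N → O),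
    x 0 = tau1 p ∧
    (∀ t < m, x t ∉ C ∧ lpNoFail α p (x t) ∧ x (t + 1) = lpStep α p (x t)) ∧
    x m = y ∧ y ∈ C

/-- `α` is a local compromiser assignment for the constraint `C`. -/
def IsLCA (C : Set (N → O)) (α : (N → O) → Set N) : Prop :=
  ∀ x, (x ∉ C → (α x).Nonempty) ∧ (x ∈ C → α x = ∅)

/-- `α` is implementable: the local priority algorithm returns a feasible
allocation (never the failure symbol) on every profile. -/
def lpImplementable [Fintype O] [Nonempty O] (C : Set (N → O)) (α : (N → O) → Set N) : Prop :=
  ∀ p : N → LinearOrder O, ∃ y, lpRunsTo C α p y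

/-- `α` is an implementable local compromiser assignment for `C` inducing the mechanism `f`,
i.e. `f = LP_α`. -/
def lpInduces [Fintype O] [Nonempty O] (C : Set (N → O)) (α : (N → O) → Set N)
    (f : (N → LinearOrder O) → N → O) : Prop :=
  IsLCA C α ∧ ∀ p, lpRunsTo C α p (f p)

/-- The local priority mechanism `LP_α` (well defined whenever `α` is implementable,
since the algorithm is deterministic). -/
def LPmech [Fintype O] [Nonempty O] (C : Set (N → O)) (α : (N → O) → Set N)
    (p : N → LinearOrder O) : N → O :=
  if h : ∃ y, lpRunsTo C α p y then h.choose else fun _ => Classical.arbitrary O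

/-- Group strategy-proofness. -/
def GSP (f : (N → LinearOrder O) → N → O) : Prop :=
  ∀ (p p' : N → LinearOrder O) (M : Set N), M.Nonempty → (∀ j ∉ M, p' j = p j) →
    ¬ ((∀ j ∈ M, wPref (p j) (f p' j) (f p j)) ∧ ∃ k ∈ M, sPref (p k) (f p' k) (f p k))

/-- (Individual) strategy-proofness. -/
def StratProof (f : (N → LinearOrder O) → N → O) : Prop :=
  ∀ (p p' : N → LinearOrder O) (i : N), (∀ j, j ≠ i → p' j = p j) →
    ¬ sPref (p i) (f p' i) (f p i)

/-- Nonbossiness. -/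
def Nonbossy (f : (N → LinearOrder O) → N → O) : Prop :=
  ∀ (p p' : N → LinearOrder O) (i : N), (∀ j, j ≠ i → p' j = p j) →
    f p' i = f p i → f p' = f p

/-- Maskin monotonicity. -/
def MaskinMono (f : (N → LinearOrder O) → N → O) : Prop :=
  ∀ p p' : N → LinearOrder O,
    (∀ (i : N) (b : O), (p i).lt b (f p i) → (p' i).lt b (f p i)) → f p' = f p

/-- Unanimity. -/
def Unanimity [Fintype O] [Nonempty O] (C : Set (N → O))
    (f : (N → LinearOrder O) → N → O) : Prop :=
  ∀ p, tau1 p ∈ C → f p = tau1 p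

/-- The Fixed compromiser condition. -/
def FixedComp [Fintype O] [Nonempty O] (C : Set (N → O))
    (f : (N → LinearOrder O) → N → O) : Prop :=
  ∀ μ, μ ∉ C → ∃ i : N, ∀ p, tau1 p = μ → f p i ≠ μ i

/-- `pi'` is obtained from `pi` by moving `c` to the bottom of the ranking. -/
def MoveBottom (pi pi' : LinearOrder O) (c : O) : Prop :=
  (∀ b, b ≠ c → pi'.lt c b) ∧ (∀ a b, a ≠ c → b ≠ c → (pi'.lt a b ↔ pi.lt a b))

/-- Compromiser invariance. -/
def CompInv [Fintype O] [Nonempty O] (C : Set (N → O))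
    (f : (N → LinearOrder O) → N → O) : Prop :=
  ∀ μ, μ ∉ C → ∀ p p' : N → LinearOrder O, tau1 p = μ →
    (∀ i, (∀ q, tau1 q = μ → f q i ≠ μ i) → MoveBottom (p i) (p' i) (μ i)) →
    (∀ i, ¬ (∀ q, tau1 q = μ → f q i ≠ μ i) → p' i = p i) →
    f p' = f p

/-- Pareto efficiency relative to the constraint `C`. -/
def ParetoEff (C : Set (N → O)) (f : (N → LinearOrder O) → N → O) : Prop :=
  ∀ p, ¬ ∃ ν ∈ C, (∀ i, wPref (p i) (ν i) (f p i)) ∧ ∃ k, sPref (p k) (ν k) (f p k)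

/-- `diffSet x y = d(x,y)`, the set of agents on which `x` and `y` differ. -/
def diffSet (x y : N → O) : Set N := {i | x i ≠ y i}

/-- Forward consistency. -/
def ForwardCons (α : (N → O) → Set N) : Prop :=
  ∀ x y : N → O, diffSet x y ⊆ α x → α x \ diffSet x y ⊆ α y

/-- The sequence of allocations `z 0, …, z m` is acyclic. -/
def AcyclicSeq (z : ℕ → N → O) (m : ℕ) : Prop :=
  ∀ (i : N) (r s t : ℕ), r < s → s < t → t ≤ m → z r i = z t i → z s i = z r i

/-- `x` and `y` are `i`-connected under `α`. -/
def IConn (α : (N → O) → Set N) (i : N) (x y : N → O) : Prop :=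
  ∃ m : ℕ, 1 ≤ m ∧ ∃ z : ℕ → N → O,
    z 0 = x ∧ z m = y ∧ AcyclicSeq z m ∧ diffSet (z 0) (z 1) = {i} ∧
    ∀ l < m, diffSet (z l) (z (l + 1)) ⊆ α (z l)

/-- Backward consistency. -/
def BackCons (C : Set (N → O)) (α : (N → O) → Set N) : Prop :=
  ∀ (i : N) (x y : N → O), x ∉ C → y ∉ C → IConn α i x y →
    ∀ x' : N → O, diffSet x x' ⊆ α y → i ∉ diffSet x x' → i ∈ α x'

/-- The pointwise union of all implementable local compromiser assignments inducing `f`. -/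
def alphaUnionAll [Fintype O] [Nonempty O] (C : Set (N → O))
    (f : (N → LinearOrder O) → N → O) : (N → O) → Set N :=
  fun x => {i | ∃ β, lpInduces C β f ∧ i ∈ β x}

end

/-! Run both local priority algorithms from `τ₁(≻)` in lockstep. Call `x ⟶ x'` a hop if `x'`
arises from `x` by moving some members of `α' x` one step down their rankings; both algorithms
take hops. The invariant is that the `α'`-run at time `t` is reachable by hops from the `α`-run
at time `t`. Along hops, forward consistency keeps every agent who has not moved in `α'`, so an
`α`-compromiser who has not yet been pushed below by the `α'`-run is also an `α'`-compromiser
and both runs move her together: the `α'`-run stays pointwise below the `α`-run. The invariant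
survives each step by a strip lemma, since two hops from `x` are joined by their pointwise
minimum. -/

open Relation

variable {N O : Type}

theorem wPref_of_le {pi : LinearOrder O} {a b : O} (h : pi.le b a) : wPref pi a b := by
  let := pi
  exact (eq_or_lt_of_le h).imp Eq.symm id

variable [Fintype O]

theorem bestLC_lt {pi : LinearOrder O} {a : O} (h : (LCfin pi a).Nonempty) :
    pi.lt (bestLC pi a) a := by
  rw [bestLC, dif_pos h]
  exact (Finset.mem_filter.mp (@Finset.max'_mem O pi _ h)).2

theorem bestLC_le (pi : LinearOrder O) (a : O) : pi.le (bestLC pi a) a := by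
  let := pi
  by_cases h : (LCfin pi a).Nonempty
  · exact (bestLC_lt h).le
  · rw [bestLC, dif_neg h]

theorem le_bestLC {pi : LinearOrder O} {a b : O} (hb : pi.lt b a) : pi.le b (bestLC pi a) := by
  have hmem : b ∈ LCfin pi a := Finset.mem_filter.mpr ⟨Finset.mem_univ b, hb⟩
  rw [bestLC, dif_pos ⟨b, hmem⟩]
  exact @Finset.le_max' O pi _ b hmem

def Hop (α : (N → O) → Set N) (p : N → LinearOrder O) (x x' : N → O) : Prop :=
  ∀ i, x' i = x i ∨ (i ∈ α x ∧ (LCfin (p i) (x i)).Nonempty ∧ x' i = bestLC (p i) (x i))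

namespace Hop

variable {α : (N → O) → Set N} {p : N → LinearOrder O} {x x' y : N → O}

theorem le (h : Hop α p x x') (i : N) : (p i).le (x' i) (x i) := by
  let := p i
  rcases h i with he | ⟨-, -, hv⟩
  · exact he.le
  · exact hv ▸ bestLC_le (p i) (x i)

theorem diffSet_subset (h : Hop α p x x') : diffSet x x' ⊆ α x := fun i hi =>
  (h i).resolve_left (Ne.symm hi) |>.1

theorem mem_of_eq (hfc : ForwardCons α) (h : Hop α p x x') {i : N} (hi : i ∈ α x)
    (he : x' i = x i) : i ∈ α x' :=
  hfc x x' h.diffSet_subset ⟨hi, fun hd => hd he.symm⟩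

theorem of_lpStep {β : (N → O) → Set N} (hβ : ∀ x, β x ⊆ α x) (hnf : lpNoFail β p x) :
    Hop α p x (lpStep β p x) := by
  intro i
  by_cases hi : i ∈ β x
  · exact Or.inr ⟨hβ x hi, hnf i hi, if_pos hi⟩
  · exact Or.inl (if_neg hi)

/-- The join of two hops from `x`: each agent moves iff she moves in one of them. -/
theorem min (hfc : ForwardCons α) (hy : Hop α p x y) (hx' : Hop α p x x') :
    Hop α p x' (fun i => (p i).min (y i) (x' i)) := by
  intro i
  dsimp only
  let := p i
  rcases hx' i with hxe | ⟨-, -, hxv⟩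
  · rcases hy i with hye | ⟨hya, hylc, hyv⟩
    · exact Or.inl (by simp only [hye, hxe, min_self])
    · refine Or.inr ⟨hx'.mem_of_eq hfc hya hxe, hxe ▸ hylc, ?_⟩
      rw [hxe, hyv]
      exact min_eq_left (bestLC_le _ _)
  · refine Or.inl (min_eq_right ?_)
    rw [hxv]
    rcases hy i with hye | ⟨-, -, hyv⟩
    · exact hye ▸ bestLC_le _ _
    · exact hyv.ge

end Hop

section Reachability

variable {α : (N → O) → Set N} {p : N → LinearOrder O} {x x' z : N → O}

theorem le_of_reflTransGen (h : ReflTransGen (Hop α p) x z) (i : N) : (p i).le (z i) (x i) := by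
  let := p i
  induction h with
  | refl => exact le_rfl
  | tail _ hbc ih => exact (hbc.le i).trans ih

theorem mem_of_reflTransGen (hfc : ForwardCons α) (h : ReflTransGen (Hop α p) x z) {i : N}
    (hi : i ∈ α x) (he : z i = x i) : i ∈ α z := by
  let := p i
  induction h with
  | refl => exact hi
  | @tail b c hab hbc ih =>
    have hb : b i = x i := le_antisymm (le_of_reflTransGen hab i) (he ▸ hbc.le i)
    exact hbc.mem_of_eq hfc (ih hb) (he.trans hb.symm)

theorem reflTransGen_of_hop (hfc : ForwardCons α) (h : ReflTransGen (Hop α p) x z)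
    (hx' : Hop α p x x') (hz : ∀ i, (p i).le (z i) (x' i)) : ReflTransGen (Hop α p) x' z := by
  induction h using ReflTransGen.head_induction_on generalizing x' with
  | refl =>
    have : x' = z := funext fun i => @le_antisymm O (p i).toPartialOrder _ _ (hx'.le i) (hz i)
    exact this ▸ .refl
  | @head x y hxy hyz ih =>
    refine .head (hxy.min hfc hx') (ih (by simpa only [min_comm] using hx'.min hfc hxy) ?_)
    intro i
    let := p i
    exact le_min (le_of_reflTransGen hyz i) (hz i)

end Reachability

section Runs

variable {α α' : (N → O) → Set N} {p : N → LinearOrder O}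

theorem lpStep_le_lpStep (hfc : ForwardCons α') (hsub : ∀ x, α x ⊆ α' x) {x y : N → O}
    (h : ReflTransGen (Hop α' p) x y) (j : N) : (p j).le (lpStep α' p y j) (lpStep α p x j) := by
  let := p j
  have hyx : y j ≤ x j := le_of_reflTransGen h j
  have hstep : lpStep α' p y j ≤ y j := by
    unfold lpStep; split_ifs
    exacts [bestLC_le _ _, le_rfl]
  by_cases hj : j ∈ α x
  · rw [show lpStep α p x j = bestLC (p j) (x j) from if_pos hj]
    rcases hyx.lt_or_eq with hlt | heq
    · exact hstep.trans (le_bestLC hlt)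
    · have hj' : j ∈ α' y := mem_of_reflTransGen hfc h (hsub x hj) heq
      rw [show lpStep α' p y j = bestLC (p j) (y j) from if_pos hj', heq]
  · rw [show lpStep α p x j = x j from if_neg hj]
    exact hstep.trans hyx

theorem reflTransGen_iterate_lpStep (hfc : ForwardCons α') (hsub : ∀ x, α x ⊆ α' x)
    (x₀ : N → O) (hnf : ∀ t, lpNoFail α p ((lpStep α p)^[t] x₀))
    (hnf' : ∀ t, lpNoFail α' p ((lpStep α' p)^[t] x₀)) (t : ℕ) :
    ReflTransGen (Hop α' p) ((lpStep α p)^[t] x₀) ((lpStep α' p)^[t] x₀) := by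
  induction t with
  | zero => exact .refl
  | succ t ih =>
    rw [Function.iterate_succ_apply', Function.iterate_succ_apply']
    exact reflTransGen_of_hop hfc (ih.tail (.of_lpStep (fun _ => le_rfl) (hnf' t)))
      (.of_lpStep hsub (hnf t)) (lpStep_le_lpStep hfc hsub ih)

end Runs

variable [Nonempty O] {α : (N → O) → Set N} {p : N → LinearOrder O}

theorem lpRunsTo_LPmech {C : Set (N → O)} (h : ∃ y, lpRunsTo C α p y) :
    lpRunsTo C α p (LPmech C α p) := by
  rw [LPmech, dif_pos h]
  exact h.choose_spec

theorem lpRunsTo.iterate_lpStep {y : N → O} (h : lpRunsTo {x | α x = ∅} α p y) :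
    (∀ t, lpNoFail α p ((lpStep α p)^[t] (tau1 p))) ∧
      ∃ m, ∀ t, m ≤ t → (lpStep α p)^[t] (tau1 p) = y := by
  obtain ⟨m, x, hx0, hstep, rfl, hy⟩ := h
  replace hy : α (x m) = ∅ := hy
  have hpre : ∀ t ≤ m, (lpStep α p)^[t] (tau1 p) = x t := by
    intro t
    induction t with
    | zero => exact fun _ => hx0.symm
    | succ t ih =>
      intro ht
      rw [Function.iterate_succ_apply', ih (by omega), (hstep t ht).2.2]
  have hfix : lpStep α p (x m) = x m := funext fun k => if_neg (hy ▸ Set.notMem_empty k)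
  have hpost : ∀ t, m ≤ t → (lpStep α p)^[t] (tau1 p) = x m := by
    intro t ht
    obtain ⟨d, rfl⟩ := Nat.exists_eq_add_of_le ht
    rw [add_comm, Function.iterate_add_apply, hpre m le_rfl, Function.iterate_fixed hfix]
  refine ⟨fun t => ?_, m, hpost⟩
  rcases lt_or_ge t m with ht | ht
  · exact hpre t ht.le ▸ (hstep t ht).2.1
  · intro i hi
    rw [hpost t ht, hy] at hi
    exact absurd hi (Set.notMem_empty i)

theorem pointwise_smaller_lca_better_general
    {N O : Type} [Fintype O] [Nonempty O]
    (α α' : (N → O) → Set N)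
    (himp : lpImplementable {x : N → O | α x = ∅} α)
    (himp' : lpImplementable {x : N → O | α' x = ∅} α')
    (hsub : ∀ x, α x ⊆ α' x) (hfc : ForwardCons α') :
    ∀ (p : N → LinearOrder O) (i : N),
      wPref (p i)
        (LPmech {x : N → O | α x = ∅} α p i)
        (LPmech {x : N → O | α' x = ∅} α' p i) := by
  intro p i
  obtain ⟨hnf, m, hm⟩ := (lpRunsTo_LPmech (himp p)).iterate_lpStep
  obtain ⟨hnf', m', hm'⟩ := (lpRunsTo_LPmech (himp' p)).iterate_lpStep
  have hle := le_of_reflTransGen (reflTransGen_iterate_lpStep hfc hsub _ hnf hnf' (max m m')) i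
  rw [hm _ (le_max_left m m'), hm' _ (le_max_right m m')] at hle
  exact wPref_of_le hle

/-- Proposition 6: if `α ⊆ α'` pointwise, each is implementable for
its own vanishing-set constraint, and `α'` is forward consistent, then every agent
weakly prefers the outcome of `LP_α` to the outcome of `LP_{α'}` at every profile. -/
theorem pointwise_smaller_lca_better
    {N O : Type} [Fintype N] [Fintype O] [Nonempty O]
    (α α' : (N → O) → Set N)
    (h1 : {x : N → O | α x = ∅}.Nonempty) (h2 : {x : N → O | α' x = ∅}.Nonempty)
    (himp : lpImplementable {x : N → O | α x = ∅} α)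
    (himp' : lpImplementable {x : N → O | α' x = ∅} α')
    (hsub : ∀ x, α x ⊆ α' x) (hfc : ForwardCons α') :
    ∀ (p : N → LinearOrder O) (i : N),
      wPref (p i)
        (LPmech {x : N → O | α x = ∅} α p i)
        (LPmech {x : N → O | α' x = ∅} α' p i) :=
  pointwise_smaller_lca_better_general α α' himp himp' hsub hfc
end

section
/- A mechanism f : 𝒫 → A is group strategy-proof if and only if f is strategy-proof and there are no profile ≻, pair of distinct agents i, j, and preferences ≻′_i, ≻′_j such that f_k(≻′_{{i,j}}, ≻_{−{i,j}}) ≿_k f_k(≻) for both k ∈ {i,j} and f_k(≻′_{{i,j}}, ≻_{−{i,j}}) ≻_k f_k(≻) for at least one k ∈ {i,j}. -/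
/- Common framework: constrained allocation, local priority mechanisms
   (Root & Ahn, "Local Priority Mechanisms"). Agents `N`, objects `O`.
   A strict preference is encoded as a `LinearOrder` on `O`, where
   `pi.lt b a` means `a` is strictly preferred to `b`. -/

open Classical

/-!
Strategy-proofness together with the absence of profitable pair deviations gives nonbossiness
(if agent `i`'s misreport leaves her own object unchanged but moves agent `l`'s, then `l`
gains in one direction of the switch, and `{i, l}` deviates profitably). Strategy-proofness and
nonbossiness give Maskin monotonicity, by changing one agent's preference at a time. Finally a
Maskin monotonic mechanism is group strategy-proof: if a coalition `M` weakly gains by moving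
from `p` to `p'`, let each member of `M` raise the object it gets at `p'` to the top of its true
preference; the resulting profile is a monotonic transformation both of `p'` and of `p` at the
respective outcomes, so `f p' = f p` and nobody gains strictly.
-/

variable {N O : Type}

@[reducible]
def raiseToTop (pi : LinearOrder O) (a : O) : LinearOrder O :=
  @LinearOrder.lift' O (Lex (Bool × O)) (@Prod.Lex.instLinearOrder Bool O _ pi)
    (fun x => toLex (decide (x = a), x)) (fun _ _ h => congrArg (fun z => (ofLex z).2) h)

lemma raiseToTop_lt_self (pi : LinearOrder O) {a b : O} (hb : b ≠ a) :
    (raiseToTop pi a).lt b a := by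
  show @LT.lt (Lex (Bool × O)) _ (toLex (decide (b = a), b)) (toLex (decide (a = a), a))
  simp [Prod.Lex.lt_iff, hb]

lemma raiseToTop_lt_iff (pi : LinearOrder O) {a b c : O} (hb : b ≠ a) (hc : c ≠ a) :
    (raiseToTop pi a).lt b c ↔ pi.lt b c := by
  show @LT.lt (Lex (Bool × O)) _ (toLex (decide (b = a), b)) (toLex (decide (c = a), c)) ↔ _
  simp [Prod.Lex.lt_iff, hb, hc]

lemma raiseToTop_lt_of_wPref {pi : LinearOrder O} {a b c : O} (hac : wPref pi a c)
    (hbc : pi.lt b c) : (raiseToTop pi a).lt b c := by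
  rcases hac with rfl | hca
  · exact raiseToTop_lt_self pi (@ne_of_lt O pi.toPreorder _ _ hbc)
  · have hba : pi.lt b a := @lt_trans O pi.toPreorder _ _ _ hbc hca
    exact (raiseToTop_lt_iff pi (@ne_of_lt O pi.toPreorder _ _ hba)
      (@ne_of_lt O pi.toPreorder _ _ hca)).2 hbc

def PairStratProof (f : (N → LinearOrder O) → N → O) : Prop :=
  ¬ ∃ (p p' : N → LinearOrder O) (i j : N), i ≠ j ∧
    (∀ k, k ≠ i → k ≠ j → p' k = p k) ∧
    (∀ k, (k = i ∨ k = j) → wPref (p k) (f p' k) (f p k)) ∧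
    (∃ k, (k = i ∨ k = j) ∧ sPref (p k) (f p' k) (f p k))

section

variable {f : (N → LinearOrder O) → N → O}

lemma GSP.stratProof (hf : GSP f) : StratProof f := by
  intro p p' i hout hi
  refine hf p p' {i} (Set.singleton_nonempty i) (fun j hj => hout j hj) ⟨?_, i, rfl, hi⟩
  rintro j rfl
  exact Or.inr hi

lemma GSP.pairStratProof (hf : GSP f) : PairStratProof f := by
  rintro ⟨p, p', i, j, -, hout, hweak, k, hk, hk'⟩
  refine hf p p' {i, j} (Set.insert_nonempty i {j}) (fun l hl => ?_)
    ⟨fun l hl => hweak l hl, k, hk, hk'⟩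
  simp only [Set.mem_insert_iff, Set.mem_singleton_iff, not_or] at hl
  exact hout l hl.1 hl.2

lemma PairStratProof.not_sPref_of_apply_eq (hf : PairStratProof f) {p p' : N → LinearOrder O}
    {i l : N} (hout : ∀ j, j ≠ i → p' j = p j) (hi : f p' i = f p i) (hli : l ≠ i) :
    ¬ sPref (p l) (f p' l) (f p l) := fun hl =>
  hf ⟨p, p', i, l, hli.symm, fun k hk _ => hout k hk,
    by rintro k (rfl | rfl) <;> [exact Or.inl hi; exact Or.inr hl], l, Or.inr rfl, hl⟩

lemma PairStratProof.nonbossy (hf : PairStratProof f) : Nonbossy f := by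
  intro p p' i hout hi
  funext l
  by_cases hli : l = i
  · rw [hli, hi]
  have hl := hout l hli
  rcases @lt_trichotomy O (p l) (f p' l) (f p l) with hlt | heq | hgt
  · refine absurd ?_ (hf.not_sPref_of_apply_eq (fun j hj => (hout j hj).symm) hi.symm hli)
    rwa [hl]
  · exact heq
  · exact absurd hgt (hf.not_sPref_of_apply_eq hout hi hli)

/-- Strategy-proofness in both directions pins down agent `i`'s own object; nonbossiness does
the rest. -/
lemma StratProof.apply_update_eq (hSP : StratProof f) (hNB : Nonbossy f) (p : N → LinearOrder O)
    (i : N) (pi : LinearOrder O) (hmono : ∀ b, (p i).lt b (f p i) → pi.lt b (f p i)) :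
    f (Function.update p i pi) = f p := by
  set q := Function.update p i pi
  have hout : ∀ j, j ≠ i → q j = p j := fun j hj => Function.update_of_ne hj _ _
  have hnot_gain : ¬ sPref (p i) (f q i) (f p i) := hSP p q i hout
  have hnot_lose : ¬ sPref (q i) (f p i) (f q i) := hSP q p i fun j hj => (hout j hj).symm
  rw [show q i = pi from Function.update_self _ _ _] at hnot_lose
  refine hNB p q i hout ?_
  rcases @lt_trichotomy O (p i) (f q i) (f p i) with hlt | heq | hgt
  · exact absurd (hmono _ hlt) hnot_lose
  · exact heq
  · exact absurd hgt hnot_gain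

lemma StratProof.maskinMono [Fintype N] (hSP : StratProof f) (hNB : Nonbossy f) :
    MaskinMono f := by
  suffices h : ∀ (s : Finset N) (p p' : N → LinearOrder O), (∀ j ∉ s, p' j = p j) →
      (∀ (i : N) (b : O), (p i).lt b (f p i) → (p' i).lt b (f p i)) → f p' = f p from
    fun p p' hmono => h Finset.univ p p' (fun j hj => absurd (Finset.mem_univ j) hj) hmono
  intro s
  induction s using Finset.induction_on with
  | empty => exact fun p p' hout _ => congrArg f (funext fun j => hout j (Finset.notMem_empty j))
  | insert i s _ ih =>
    intro p p' hout hmono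
    have hq : f (Function.update p i (p' i)) = f p := hSP.apply_update_eq hNB p i _ (hmono i)
    rw [← hq]
    refine ih _ p' (fun j hj => ?_) (fun j b hb => ?_)
    · by_cases hji : j = i
      · subst hji; simp
      · rw [Function.update_of_ne hji]
        exact hout j (by simp [hji, hj])
    · rw [hq] at hb ⊢
      by_cases hji : j = i
      · subst hji
        rwa [Function.update_self] at hb
      · rw [Function.update_of_ne hji] at hb
        exact hmono j b hb

lemma MaskinMono.gsp (hMM : MaskinMono f) : GSP f := by
  rintro p p' M - hout ⟨hweak, k, -, hk⟩
  let s : N → LinearOrder O := fun j => if j ∈ M then raiseToTop (p j) (f p' j) else p j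
  have hs_in : ∀ j ∈ M, s j = raiseToTop (p j) (f p' j) := fun j hj => if_pos hj
  have hs_out : ∀ j ∉ M, s j = p j := fun j hj => if_neg hj
  have hs' : f s = f p' := hMM p' s fun j b hb => by
    by_cases hj : j ∈ M
    · rw [hs_in j hj]
      exact raiseToTop_lt_self _ (@ne_of_lt O (p' j).toPreorder _ _ hb)
    · rwa [hs_out j hj, ← hout j hj]
  have hs : f s = f p := hMM p s fun j b hb => by
    by_cases hj : j ∈ M
    · rw [hs_in j hj]
      exact raiseToTop_lt_of_wPref (hweak j hj) hb
    · rwa [hs_out j hj]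
  rw [← hs', hs] at hk
  exact @lt_irrefl O (p k).toPreorder _ hk

end

theorem gsp_iff_pairs_general
    {N O : Type} [Fintype N]
    (f : (N → LinearOrder O) → N → O) :
    GSP f ↔
      (StratProof f ∧
        ¬ ∃ (p p' : N → LinearOrder O) (i j : N), i ≠ j ∧
          (∀ k, k ≠ i → k ≠ j → p' k = p k) ∧
          (∀ k, (k = i ∨ k = j) → wPref (p k) (f p' k) (f p k)) ∧
          (∃ k, (k = i ∨ k = j) ∧ sPref (p k) (f p' k) (f p k))) :=
  ⟨fun hf => ⟨hf.stratProof, hf.pairStratProof⟩,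
    fun ⟨hSP, hpair⟩ => (hSP.maskinMono (PairStratProof.nonbossy hpair)).gsp⟩

/-- Corollary A.1: a mechanism is group strategy-proof iff it is
individually strategy-proof and there is no profitable joint misreport by any pair of
agents. -/
theorem gsp_iff_pairs
    {N O : Type} [Fintype N] [Fintype O]
    (f : (N → LinearOrder O) → N → O) :
    GSP f ↔
      (StratProof f ∧
        ¬ ∃ (p p' : N → LinearOrder O) (i j : N), i ≠ j ∧
          (∀ k, k ≠ i → k ≠ j → p' k = p k) ∧
          (∀ k, (k = i ∨ k = j) → wPref (p k) (f p' k) (f p k)) ∧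
          (∃ k, (k = i ∨ k = j) ∧ sPref (p k) (f p' k) (f p k))) :=
  gsp_iff_pairs_general f
end
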